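/- Let q be an indeterminate and [n]_q = 1+q+...+q^{n-1}. Let α, β, γ, δ be nonnegative integers with γ + δ = β, γ ≤ α, and δ ≤ α. Then the following identity holds in ℚ(q): (q^α + 1)·[β]_q·[α]_q + q^β·[α−γ]_q·[α−δ]_q = [α+β−δ]_q·[α+β−γ]_q. -/
import Mathlib


/-- The q-integer `[n]_q = 1 + q + ... + q^(n-1)` in `ℚ(q)`. -/
noncomputable def qint (n : ℕ) : RatFunc ℚ :=
  ∑ i ∈ Finset.range n, RatFunc.X ^ i

lemma qint_mul (n : ℕ) : qint n * (RatFunc.X - 1) = (RatFunc.X : RatFunc ℚ) ^ n - 1 := by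
  simpa [qint] using geom_sum_mul (RatFunc.X : RatFunc ℚ) n

lemma Xsub_ne : (RatFunc.X : RatFunc ℚ) - 1 ≠ 0 := by
  have : (RatFunc.X : RatFunc ℚ) - 1 = algebraMap (Polynomial ℚ) _ (Polynomial.X - 1) := by
    rw [map_sub, map_one, RatFunc.algebraMap_X]
  rw [this]
  exact RatFunc.algebraMap_ne_zero (by
    intro h
    have := congrArg (Polynomial.eval 0) h
    simp at this)

theorem stmt2 (α β γ δ : ℕ) (hβ : γ + δ = β) (hγ : γ ≤ α) (hδ : δ ≤ α) :
    ((RatFunc.X : RatFunc ℚ) ^ α + 1) * qint β * qint α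
      + RatFunc.X ^ β * (qint (α - γ) * qint (α - δ))
      = qint (α + β - δ) * qint (α + β - γ) := by
  set c := α - γ with hcdef
  set d := α - δ with hddef
  have hc : α = γ + c := by omega
  have hd : α = δ + d := by omega
  rw [show α + β - δ = α + γ by omega, show α + β - γ = α + δ by omega]
  apply mul_right_cancel₀ (b := (RatFunc.X - 1) * (RatFunc.X - 1)) (mul_ne_zero Xsub_ne Xsub_ne)
  have e1 : (((RatFunc.X : RatFunc ℚ) ^ α + 1) * qint β * qint α
      + RatFunc.X ^ β * (qint c * qint d)) * ((RatFunc.X - 1) * (RatFunc.X - 1))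
      = ((RatFunc.X : RatFunc ℚ) ^ α + 1) * (qint β * (RatFunc.X - 1)) * (qint α * (RatFunc.X - 1))
      + RatFunc.X ^ β * ((qint c * (RatFunc.X - 1)) * (qint d * (RatFunc.X - 1))) := by ring
  have e2 : qint (α + γ) * qint (α + δ) * ((RatFunc.X - 1) * (RatFunc.X - 1))
      = (qint (α + γ) * (RatFunc.X - 1)) * (qint (α + δ) * (RatFunc.X - 1)) := by ring
  rw [e1, e2, qint_mul, qint_mul, qint_mul, qint_mul, qint_mul, qint_mul]
  have h1 : (RatFunc.X : RatFunc ℚ) ^ γ * RatFunc.X ^ c = RatFunc.X ^ α := by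
    rw [← pow_add, ← hc]
  have h2 : (RatFunc.X : RatFunc ℚ) ^ δ * RatFunc.X ^ d = RatFunc.X ^ α := by
    rw [← pow_add, ← hd]
  have h3 : (RatFunc.X : RatFunc ℚ) ^ β = RatFunc.X ^ γ * RatFunc.X ^ δ := by
    rw [← pow_add, hβ]
  have h4 : (RatFunc.X : RatFunc ℚ) ^ (α + γ) = RatFunc.X ^ α * RatFunc.X ^ γ := pow_add _ _ _
  have h5 : (RatFunc.X : RatFunc ℚ) ^ (α + δ) = RatFunc.X ^ α * RatFunc.X ^ δ := pow_add _ _ _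
  rw [h3, h4, h5]
  linear_combination ((RatFunc.X : RatFunc ℚ) ^ δ * RatFunc.X ^ d - RatFunc.X ^ δ) * h1
    + ((RatFunc.X : RatFunc ℚ) ^ α - RatFunc.X ^ γ) * h2
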